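/- arXiv:1605.08811 — 4 statements merged into one kernel-verified Lean document; each statement's English description precedes it below -/
import Mathlib

section
/- Let κ be a regular uncountable cardinal and λ a cardinal with cf(λ) > κ. Fix an increasing sequence ⟨λ_i : i < cf(λ)⟩ cofinal in λ. Let T be a family of subsets of λ and for each i < cf(λ) let Lev_i(T) = {A ∩ λ_i : A ∈ T}, and suppose |Lev_i(T)| < κ for every i. Then there exist a stationary set S ⊆ cf(λ) consisting of ordinals of cofinality κ and a fixed k < cf(λ) such that for all i ∈ S and all A, B ∈ T, if A ∩ λ_i ≠ B ∩ λ_i then A ∩ λ_k ≠ B ∩ λ_k. -/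
/-!
Call `o` a split level of `T` if some `A, B ∈ T` agree on every `λ_j` with `j < o` but differ on
`λ_o`. Split levels `o < o' ≤ i` carry distinct pairs of traces on `λ_i`: the pair witnessing `o'`
agrees on `λ_o`, so the same traces on `λ_i` would force the pair witnessing `o` to agree there
too. Hence fewer than `κ` split levels lie below any `i < ν`, and since `κ < cf ν` they are
bounded by some `k < ν`. A difference `A ∩ λ_i ≠ B ∩ λ_i` first appears at a split level, hence
already on `λ_k`, for every `i < ν`. For `S` take the ordinals of cofinality `κ` below `ν`: every
club contains the supremum of its first `κ` elements.
-/

/-- `C` is a closed unbounded subset of the ordinal `o`. -/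
def IsClubIn (o : Ordinal.{0}) (C : Set Ordinal.{0}) : Prop :=
  C ⊆ Set.Iio o ∧ (∀ a < o, ∃ b ∈ C, a ≤ b) ∧
    ∀ a < o, 0 < a → (∀ b < a, ∃ c ∈ C, b < c ∧ c < a) → a ∈ C

/-- `S` is a stationary subset of the ordinal `o`. -/
def IsStationaryIn (o : Ordinal.{0}) (S : Set Ordinal.{0}) : Prop :=
  S ⊆ Set.Iio o ∧ ∀ C : Set Ordinal.{0}, IsClubIn o C → (S ∩ C).Nonempty

universe u v

open Cardinal Ordinal Set

theorem Ordinal.lift_mk_Iio_lt_cof {j ν : Ordinal.{u}} (h : j.card < ν.cof) :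
    Cardinal.lift.{u} #(Iio j) < (Ordinal.lift.{u + 1} ν).cof := by
  rwa [Cardinal.mk_Iio_ordinal, ← Ordinal.lift_cof, Cardinal.lift_lift, Cardinal.lift_lt]

/-- Adjoining `Ici ν` makes the set unbounded, so `enumOrd` is defined everywhere; below
`cof ν` it still enumerates `C`. -/
theorem Ordinal.enumOrd_union_Ici_lt {ν : Ordinal.{u}} {C : Set Ordinal.{u}} (hCν : C ⊆ Iio ν)
    (hC : ∀ a < ν, ∃ b ∈ C, a ≤ b) {j : Ordinal.{u}} (hj : j.card < ν.cof) :
    enumOrd (C ∪ Ici ν) j < ν := by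
  induction j using WellFoundedLT.induction with
  | _ j IH =>
    have hbelow : ∀ b : Iio j, enumOrd (C ∪ Ici ν) b < ν := fun b =>
      IH b b.2 ((Ordinal.card_le_card b.2.le).trans_lt hj)
    obtain ⟨a, haC, ha⟩ := hC _ (lift_iSup_add_one_lt_of_lt_cof (lift_mk_Iio_lt_cof hj) hbelow)
    refine (enumOrd_le_of_forall_lt (Or.inl haC) fun b hb => ?_).trans_lt (hCν haC)
    exact (lt_add_one _).trans_le
      ((Ordinal.le_iSup (fun b : Iio j => enumOrd (C ∪ Ici ν) b + 1) ⟨b, hb⟩).trans ha)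

theorem IsClubIn.exists_cof_eq {κ : Cardinal.{0}} {ν : Ordinal.{0}} {C : Set Ordinal.{0}}
    (hC : IsClubIn ν C) (hκ : κ.IsRegular) (hκν : κ < ν.cof) : ∃ i ∈ C, i.cof = κ := by
  obtain ⟨hCν, hCunb, hCclosed⟩ := hC
  have hunb : ¬BddAbove (C ∪ Ici ν) := fun h => not_bddAbove_Ici ν (h.mono subset_union_right)
  have hκlim : Order.IsSuccLimit κ.ord := isSuccLimit_ord hκ.aleph0_le
  have hmemC : ∀ j < κ.ord, enumOrd (C ∪ Ici ν) j ∈ C := fun j hj =>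
    ((enumOrd_mem hunb j).resolve_right
      (enumOrd_union_Ici_lt hCν hCunb ((lt_ord.1 hj).trans hκν)).not_ge)
  let f : Iio κ.ord → Ordinal := fun j => enumOrd (C ∪ Ici ν) j
  have hf : StrictMono f := (enumOrd_strictMono hunb).comp (Subtype.strictMono_coe _)
  have hlt_iSup : ∀ j, f j < ⨆ j, f j := fun j =>
    (hf (show j < ⟨j + 1, hκlim.add_one_lt j.2⟩ from lt_add_one j.1)).trans_le
      (Ordinal.le_iSup f _)
  have hcof : (⨆ j, f j).cof = κ := by
    rw [cof_iSup_Iio hf hκlim.isSuccPrelimit, hκ.cof_ord]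
  refine ⟨⨆ j, f j, hCclosed _ ?_ ?_ fun b hb => ?_, hcof⟩
  · exact lift_iSup_lt_of_lt_cof (lift_mk_Iio_lt_cof (by rwa [card_ord]))
      fun j => hCν (hmemC j j.2)
  · rw [← cof_pos, hcof]
    exact aleph0_pos.trans_le hκ.aleph0_le
  · obtain ⟨j, hj⟩ := Ordinal.lt_iSup_iff.1 hb
    exact ⟨f j, hmemC j j.2, hj, hlt_iSup j⟩

theorem isStationaryIn_setOf_cof_eq {κ : Cardinal.{0}} {ν : Ordinal.{0}} (hκ : κ.IsRegular)
    (hκν : κ < ν.cof) : IsStationaryIn ν {i | i < ν ∧ i.cof = κ} := by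
  refine ⟨fun i hi => hi.1, fun C hC => ?_⟩
  obtain ⟨i, hiC, hi⟩ := hC.exists_cof_eq hκ hκν
  exact ⟨i, ⟨hC.1 hiC, hi⟩, hiC⟩

section SplitLevels

variable {α : Type v} {X : Ordinal.{u} → Set α} {T : Set (Set α)}

theorem Set.inter_eq_inter_of_subset {s t A B : Set α} (hst : s ⊆ t) (h : A ∩ t = B ∩ t) :
    A ∩ s = B ∩ s := by
  rw [← inter_eq_right.2 hst, ← inter_assoc, h, inter_assoc]

/-- For `s = λ_i` this is the paper's `Lev_i(T)`. -/
def traces (T : Set (Set α)) (s : Set α) : Set (Set α) := (· ∩ s) '' T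

def IsSplitLevel (X : Ordinal.{u} → Set α) (T : Set (Set α)) (o : Ordinal.{u}) : Prop :=
  ∃ A ∈ T, ∃ B ∈ T, (∀ j < o, A ∩ X j = B ∩ X j) ∧ A ∩ X o ≠ B ∩ X o

theorem exists_isSplitLevel_le {A B : Set α} (hA : A ∈ T) (hB : B ∈ T) {i : Ordinal.{u}}
    (h : A ∩ X i ≠ B ∩ X i) : ∃ o ≤ i, IsSplitLevel X T o ∧ A ∩ X o ≠ B ∩ X o := by
  obtain ⟨o, ho, hmin⟩ := wellFounded_lt.has_min {j | A ∩ X j ≠ B ∩ X j} ⟨i, h⟩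
  exact ⟨o, not_lt.1 (hmin i h),
    ⟨A, hA, B, hB, fun j hj => not_not.1 fun hne => hmin j hne hj, ho⟩, ho⟩

theorem lift_mk_le_of_forall_isSplitLevel {O : Set Ordinal.{u}} {i : Ordinal.{u}}
    (hX : ∀ j ≤ i, X j ⊆ X i) (hO : ∀ o ∈ O, o ≤ i ∧ IsSplitLevel X T o) :
    Cardinal.lift.{v} #O ≤ Cardinal.lift.{u + 1} #(traces T (X i) × traces T (X i)) := by
  choose A hA B hB hagree hsplit using fun o : O => (hO o o.2).2
  have hpair_ne : ∀ o o' : O, o < o' → A o ∩ X i = A o' ∩ X i → B o ∩ X i ≠ B o' ∩ X i := by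
    intro o o' hlt hA' hB'
    have hsub := hX o (hO o o.2).1
    apply hsplit o
    calc A o ∩ X o = A o' ∩ X o := inter_eq_inter_of_subset hsub hA'
      _ = B o' ∩ X o := hagree o' o hlt
      _ = B o ∩ X o := (inter_eq_inter_of_subset hsub hB').symm
  refine lift_mk_le_lift_mk_of_injective
    (f := fun o => (⟨A o ∩ X i, A o, hA o, rfl⟩, ⟨B o ∩ X i, B o, hB o, rfl⟩)) fun o o' h => ?_
  simp only [Prod.mk.injEq, Subtype.ext_iff] at h
  rcases lt_trichotomy o o' with hlt | heq | hgt
  · exact (hpair_ne o o' hlt h.1 h.2).elim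
  · exact heq
  · exact (hpair_ne o' o hgt h.1.symm h.2.symm).elim

theorem exists_lt_forall_isSplitLevel_le {κ : Cardinal.{u}} {ν : Ordinal.{u}} (hκ : ℵ₀ ≤ κ)
    (hκν : κ < ν.cof) (hX : ∀ i < ν, ∀ j ≤ i, X j ⊆ X i)
    (hT : ∀ i < ν, Cardinal.lift.{u} #(traces T (X i)) < Cardinal.lift.{v} κ) :
    ∃ k < ν, ∀ o < ν, IsSplitLevel X T o → o ≤ k := by
  by_contra! h
  set O := {o | o < ν ∧ IsSplitLevel X T o}
  have hO : BddAbove O := ⟨ν, fun o ho => ho.1.le⟩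
  have hcofO : (Ordinal.lift.{u + 1} ν).cof ≤ #O := by
    by_contra! hsmall
    obtain ⟨o, hoν, hsplit, ho⟩ := h _ (sSup_lt_of_lt_cof hsmall fun o ho => ho.1)
    exact ho.not_ge (le_csSup hO ⟨hoν, hsplit⟩)
  obtain ⟨O', hO'O, hO'⟩ : ∃ O' ⊆ O, #O' = Cardinal.lift.{u + 1} κ := by
    refine le_mk_iff_exists_subset.1 (le_trans ?_ hcofO)
    rw [← lift_cof, Cardinal.lift_le]
    exact hκν.le
  have hiν : sSup O' < ν := by
    refine sSup_lt_of_lt_cof ?_ fun o ho => (hO'O ho).1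
    rwa [hO', ← lift_cof, Cardinal.lift_lt]
  have hle := lift_mk_le_of_forall_isSplitLevel (hX _ hiν)
    fun o ho => ⟨le_csSup (hO.mono hO'O) ho, (hO'O ho).2⟩
  have hlt := Cardinal.lift_strictMono.{_, u + 1} (hT _ hiν)
  rw [hO', mk_prod, Cardinal.lift_id, Cardinal.lift_mul] at hle
  simp only [Cardinal.lift_lift] at hle hlt
  exact hle.not_gt (mul_lt_of_lt (aleph0_le_lift.2 hκ) hlt hlt)

theorem exists_level_separating_traces {κ : Cardinal.{u}} {ν : Ordinal.{u}} (hκ : ℵ₀ ≤ κ)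
    (hκν : κ < ν.cof) (hX : ∀ i < ν, ∀ j ≤ i, X j ⊆ X i)
    (hT : ∀ i < ν, Cardinal.lift.{u} #(traces T (X i)) < Cardinal.lift.{v} κ) :
    ∃ k < ν, ∀ i < ν, ∀ A ∈ T, ∀ B ∈ T, A ∩ X i ≠ B ∩ X i → A ∩ X k ≠ B ∩ X k := by
  obtain ⟨k, hkν, hk⟩ := exists_lt_forall_isSplitLevel_le hκ hκν hX hT
  refine ⟨k, hkν, fun i hi A hA B hB h hAB => ?_⟩
  obtain ⟨o, hoi, hsplit, ho⟩ := exists_isSplitLevel_le hA hB h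
  exact ho (inter_eq_inter_of_subset (hX k hkν o (hk o (hoi.trans_lt hi) hsplit)) hAB)

end SplitLevels

theorem stmt3_general (κ l : Cardinal.{0}) (hκreg : κ.IsRegular)
    (hcf : κ < l.ord.cof)
    (ν : Ordinal.{0}) (hν : ν = l.ord.cof.ord)
    (lam : Ordinal.{0} → Ordinal.{0})
    (hinc : ∀ i j, i < j → j < ν → lam i < lam j)
    (T : Set (Set Ordinal.{0}))
    (hlev : ∀ i < ν,
      Cardinal.mk {x : Set Ordinal.{0} | ∃ A ∈ T, x = A ∩ Set.Iio (lam i)} <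
        Cardinal.lift.{1} κ) :
    ∃ (S : Set Ordinal.{0}) (k : Ordinal.{0}),
      IsStationaryIn ν S ∧ (∀ i ∈ S, i.cof = κ) ∧ k < ν ∧
      ∀ i ∈ S, ∀ A ∈ T, ∀ B ∈ T,
        A ∩ Set.Iio (lam i) ≠ B ∩ Set.Iio (lam i) →
        A ∩ Set.Iio (lam k) ≠ B ∩ Set.Iio (lam k) := by
  have hκν : κ < ν.cof := by rwa [hν, cof_ord_cof]
  have hmono : ∀ i < ν, ∀ j ≤ i, Iio (lam j) ⊆ Iio (lam i) := fun i hi j hj =>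
    Iio_subset_Iio (hj.eq_or_lt.elim (fun h => h ▸ le_rfl) fun h => (hinc j i h hi).le)
  have htrace : ∀ i < ν, Cardinal.lift.{0} #(traces T (Iio (lam i))) < Cardinal.lift.{1} κ := by
    intro i hi
    have : traces T (Iio (lam i)) = {x | ∃ A ∈ T, x = A ∩ Iio (lam i)} := by
      ext x
      simp [traces, eq_comm]
    simpa [this] using hlev i hi
  obtain ⟨k, hkν, hk⟩ := exists_level_separating_traces hκreg.aleph0_le hκν hmono htrace
  exact ⟨_, k, isStationaryIn_setOf_cof_eq hκreg hκν, fun i hi => hi.2, hkν, fun i hi => hk i hi.1⟩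

/-- If a family `T` of subsets of `λ` has all levels `Lev_i(T)` of size `< κ` (with
`cf(λ) > κ`, `κ` regular uncountable), then there are a stationary set `S ⊆ cf(λ)` of
ordinals of cofinality `κ` and a fixed `k < cf(λ)` such that for `i ∈ S`, distinct
restrictions to `λ_i` already differ at `λ_k`. -/
theorem stmt3 (κ l : Cardinal.{0}) (hκreg : κ.IsRegular) (hκunc : Cardinal.aleph0 < κ)
    (hcf : κ < l.ord.cof)
    (ν : Ordinal.{0}) (hν : ν = l.ord.cof.ord)
    (lam : Ordinal.{0} → Ordinal.{0})
    (hlt : ∀ i < ν, lam i < l.ord)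
    (hinc : ∀ i j, i < j → j < ν → lam i < lam j)
    (hcofinal : ∀ a < l.ord, ∃ i < ν, a ≤ lam i)
    (T : Set (Set Ordinal.{0})) (hT : ∀ A ∈ T, A ⊆ Set.Iio l.ord)
    (hlev : ∀ i < ν,
      Cardinal.mk {x : Set Ordinal.{0} | ∃ A ∈ T, x = A ∩ Set.Iio (lam i)} <
        Cardinal.lift.{1} κ) :
    ∃ (S : Set Ordinal.{0}) (k : Ordinal.{0}),
      IsStationaryIn ν S ∧ (∀ i ∈ S, i.cof = κ) ∧ k < ν ∧
      ∀ i ∈ S, ∀ A ∈ T, ∀ B ∈ T,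
        A ∩ Set.Iio (lam i) ≠ B ∩ Set.Iio (lam i) →
        A ∩ Set.Iio (lam k) ≠ B ∩ Set.Iio (lam k) :=
  stmt3_general κ l hκreg hcf ν hν lam hinc T hlev
end

section
/- Let P and Q be partial orders with P ⊆ Q (P a suborder of Q), and suppose there is a map r : Q → P such that: (i) q ≤ r(q) in Q for all q ∈ Q; (ii) r is order-preserving; (iii) r(p) = p for p ∈ P; and (iv) for every q ∈ Q and every u ∈ P with u ≤ r(q), there exists q' ≤ q in Q with r(q') = u. Then for every regular open subset A ⊆ P, its downward closure dcl(A) = {q ∈ Q : ∃a ∈ A, q ≤ a} is regular open in Q; moreover, an element q ∈ Q lies in dcl(A) if and only if r(q) ∈ A. Consequently the map A ↦ dcl(A) preserves arbitrary intersections of regular open sets and sends the regular-open complement of A in P to the regular-open complement of dcl(A) in Q. -/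
universe u v

/-- Downward closure of a subset of a preorder. -/
def dcl {Q : Type u} [Preorder Q] (A : Set Q) : Set Q := {q | ∃ a ∈ A, q ≤ a}

/-- `A` is a regular open subset of the suborder `S`. -/
def RegOpenIn {Q : Type u} [Preorder Q] (S A : Set Q) : Prop :=
  A ⊆ S ∧ (∀ p ∈ A, ∀ q ∈ S, q ≤ p → q ∈ A) ∧
    ∀ p ∈ S, (∀ q ∈ S, q ≤ p → ∃ r ∈ A, r ≤ q) → p ∈ A

/-- `A` is a regular open subset of the whole preorder. -/
def RegOpen {Q : Type u} [Preorder Q] (A : Set Q) : Prop :=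
  (∀ p ∈ A, ∀ q, q ≤ p → q ∈ A) ∧
    ∀ p, (∀ q ≤ p, ∃ r ∈ A, r ≤ q) → p ∈ A

/- Since the projection `r` is monotone, extensive and fixes `P` pointwise, `q ≤ a` for some
`a ∈ A` forces `r q ≤ a`; as `A` is open in `P`, this gives `q ∈ dcl A ↔ r q ∈ A`. Every question
about `dcl A` thus becomes one about `A` at the point `r q`, and the lifting property (iv) turns
density below `r q` in `P` into density below `q` in `Q`. -/

section Projection

variable {Q : Type u} [Preorder Q]

def IsOpenIn (S A : Set Q) : Prop :=
  A ⊆ S ∧ ∀ p ∈ A, ∀ q ∈ S, q ≤ p → q ∈ A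

theorem RegOpenIn.isOpenIn {S A : Set Q} (hA : RegOpenIn S A) : IsOpenIn S A :=
  ⟨hA.1, hA.2.1⟩

def regComplIn (S A : Set Q) : Set Q := {p | p ∈ S ∧ ∀ q ∈ S, q ≤ p → q ∉ A}

def regCompl (A : Set Q) : Set Q := {x | ∀ y ≤ x, y ∉ A}

theorem isOpenIn_regComplIn (S A : Set Q) : IsOpenIn S (regComplIn S A) :=
  ⟨fun _ hp => hp.1, fun _ hp _ hqS hqp =>
    ⟨hqS, fun s hsS hsq => hp.2 s hsS (hsq.trans hqp)⟩⟩

theorem mem_dcl_of_le {A : Set Q} {p q : Q} (hp : p ∈ dcl A) (hqp : q ≤ p) : q ∈ dcl A :=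
  let ⟨a, ha, hpa⟩ := hp
  ⟨a, ha, hqp.trans hpa⟩

variable {P : Set Q} {r : Q → Q}

theorem mem_dcl_iff_proj_mem (hr_mem : ∀ q, r q ∈ P) (hle : ∀ q, q ≤ r q)
    (hmono : ∀ q q', q ≤ q' → r q ≤ r q') (hfix : ∀ p ∈ P, r p = p)
    {A : Set Q} (hA : IsOpenIn P A) (q : Q) : q ∈ dcl A ↔ r q ∈ A := by
  refine ⟨fun ⟨a, ha, hqa⟩ => ?_, fun h => ⟨r q, h, hle q⟩⟩
  have hrqa : r q ≤ a := (hmono q a hqa).trans_eq (hfix a (hA.1 ha))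
  exact hA.2 a ha (r q) (hr_mem q) hrqa

theorem regOpen_dcl (hr_mem : ∀ q, r q ∈ P) (hle : ∀ q, q ≤ r q)
    (hmono : ∀ q q', q ≤ q' → r q ≤ r q') (hfix : ∀ p ∈ P, r p = p)
    (hlift : ∀ q, ∀ u ∈ P, u ≤ r q → ∃ q', q' ≤ q ∧ r q' = u)
    {A : Set Q} (hA : RegOpenIn P A) : RegOpen (dcl A) := by
  have hmem := mem_dcl_iff_proj_mem hr_mem hle hmono hfix hA.isOpenIn
  refine ⟨fun p hp q hqp => mem_dcl_of_le hp hqp, fun p hdense => ?_⟩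
  rw [hmem]
  refine hA.2.2 (r p) (hr_mem p) fun u huP hup => ?_
  obtain ⟨q, hqp, rfl⟩ := hlift p u huP hup
  obtain ⟨s, hs, hsq⟩ := hdense q hqp
  exact ⟨r s, (hmem s).1 hs, hmono s q hsq⟩

theorem dcl_iInter (hr_mem : ∀ q, r q ∈ P) (hle : ∀ q, q ≤ r q)
    (hmono : ∀ q q', q ≤ q' → r q ≤ r q') (hfix : ∀ p ∈ P, r p = p)
    {ι : Sort*} {A : ι → Set Q} (hA : ∀ i, IsOpenIn P (A i)) :
    dcl (⋂ i, A i) = ⋂ i, dcl (A i) := by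
  refine Set.Subset.antisymm (fun q ⟨a, ha, hqa⟩ => Set.mem_iInter.2 fun i =>
    ⟨a, Set.mem_iInter.1 ha i, hqa⟩) fun q hq => ⟨r q, Set.mem_iInter.2 fun i => ?_, hle q⟩
  exact (mem_dcl_iff_proj_mem hr_mem hle hmono hfix (hA i) q).1 (Set.mem_iInter.1 hq i)

theorem dcl_regComplIn (hr_mem : ∀ q, r q ∈ P) (hle : ∀ q, q ≤ r q)
    (hmono : ∀ q q', q ≤ q' → r q ≤ r q') (hfix : ∀ p ∈ P, r p = p)
    (hlift : ∀ q, ∀ u ∈ P, u ≤ r q → ∃ q', q' ≤ q ∧ r q' = u)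
    {A : Set Q} (hA : IsOpenIn P A) : dcl (regComplIn P A) = regCompl (dcl A) := by
  ext x
  rw [mem_dcl_iff_proj_mem hr_mem hle hmono hfix (isOpenIn_regComplIn P A)]
  simp only [regComplIn, regCompl, Set.mem_ofPred_eq,
    mem_dcl_iff_proj_mem hr_mem hle hmono hfix hA, hr_mem x, true_and]
  refine ⟨fun h y hyx => h (r y) (hr_mem y) (hmono y x hyx), fun h u huP hux => ?_⟩
  obtain ⟨y, hyx, rfl⟩ := hlift x u huP hux
  exact h y hyx

end Projection

/-- Given a suborder `P ⊆ Q` with a projection `r : Q → P` (with `q ≤ r q`, `r`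
order-preserving, `r` the identity on `P`, and every `u ≤ r q` in `P` realized as `r q'`
for some `q' ≤ q`), the downward closure of any regular open `A ⊆ P` is regular open in
`Q`, characterised by `q ∈ dcl A ↔ r q ∈ A`; moreover `dcl` preserves arbitrary
intersections of regular open sets and sends regular-open complements to
regular-open complements. -/
theorem stmt6 {Q : Type u} [Preorder Q] (P : Set Q) (r : Q → Q)
    (hrP : ∀ q, r q ∈ P)
    (h1 : ∀ q, q ≤ r q)
    (h2 : ∀ q q', q ≤ q' → r q ≤ r q')
    (h3 : ∀ p ∈ P, r p = p)
    (h4 : ∀ q, ∀ u ∈ P, u ≤ r q → ∃ q', q' ≤ q ∧ r q' = u)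
    (ι : Type v) :
    (∀ A : Set Q, RegOpenIn P A →
      (RegOpen (dcl A) ∧ ∀ q, q ∈ dcl A ↔ r q ∈ A)) ∧
    (∀ A : ι → Set Q, (∀ i, RegOpenIn P (A i)) →
      dcl (⋂ i, A i) = ⋂ i, dcl (A i)) ∧
    (∀ A : Set Q, RegOpenIn P A →
      dcl {p | p ∈ P ∧ ∀ q ∈ P, q ≤ p → q ∉ A} = {x | ∀ y ≤ x, y ∉ dcl A}) :=
  ⟨fun _ hA =>
      ⟨regOpen_dcl hrP h1 h2 h3 h4 hA, mem_dcl_iff_proj_mem hrP h1 h2 h3 hA.isOpenIn⟩,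
    fun _ hA => dcl_iInter hrP h1 h2 h3 fun i => (hA i).isOpenIn,
    fun _ hA => dcl_regComplIn hrP h1 h2 h3 h4 hA.isOpenIn⟩
end

section
/- Let 𝔸 be the set of finite partial functions from ω to 2 ordered by reverse inclusion (Cohen forcing). Let ⟨D_i : i < ω⟩ be any countable family of dense subsets of 𝔸, and let x ⊆ ω. Then there exist total functions g, h : ω → 2 such that: (a) for every i, some finite initial segment of g belongs to D_i, and likewise for h; and (b) letting ḡ = {n : g(n) = 1} and h̄ = {n : h(n) = 1}, the set ḡ ∩ h̄ is infinite and for every i < ω, the i-th element of ḡ ∩ h̄ (in increasing order) is even if and only if i ∈ x. -/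
/-!
Build two chains of conditions `p₀ ⊑ p₁ ⊑ ⋯` and `q₀ ⊑ q₁ ⊑ ⋯` with `|pᵢ| = |qᵢ|`. At stage `i`,
extend `pᵢ` into `Dᵢ`, then extend `qᵢ`, padded with `0`s to the new length of `p`, into `Dᵢ`; the
new parts of the two conditions then share no `1`. Pad both with `0`s to a common length `mᵢ` that
is even iff `i ∈ x`, and append a `1` to both. The common `1`s of the limits `g` and `h` are then
exactly the strictly increasing positions `mᵢ`.
-/

namespace List

theorem IsPrefix.getD_eq {α : Type*} {l₁ l₂ : List α} (h : l₁ <+: l₂) (d : α) {n : ℕ}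
    (hn : n < l₁.length) : l₂.getD n d = l₁.getD n d := by
  obtain ⟨t, rfl⟩ := h
  exact getD_append _ _ _ _ hn

theorem getD_rightpad {α : Type*} (l : List α) (d : α) (m n : ℕ) :
    (l.rightpad m d).getD n d = l.getD n d := by
  by_cases hn : n < l.length
  · exact getD_append _ _ _ _ hn
  · simp only [rightpad, getD_eq_getElem?_getD, getElem?_append, hn, ↓reduceIte,
      getElem?_replicate]
    grind

end List

section PrefixChain

variable {α : Type*} (c : ℕ → List α) (d : α)

def prefixChainLimit (n : ℕ) : α := (c (n + 1)).getD n d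

variable {c} (hc : ∀ i, c i <+: c (i + 1)) (hlen : ∀ i, i ≤ (c i).length)
include hc

theorem prefixChain_mono {i j : ℕ} (hij : i ≤ j) : c i <+: c j :=
  Nat.rel_of_forall_rel_succ_of_le _ hc hij

include hlen

theorem prefixChainLimit_eq_getD {i n : ℕ} (hn : n < (c i).length) :
    prefixChainLimit c d n = (c i).getD n d := by
  have hn' : n < (c (n + 1)).length := (hlen (n + 1)).trans_lt' n.lt_succ_self
  rcases le_total i (n + 1) with hi | hi
  · exact (prefixChain_mono hc hi).getD_eq d hn
  · exact ((prefixChain_mono hc hi).getD_eq d hn').symm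

theorem ofFn_prefixChainLimit {i : ℕ} {r : List α} (hr : r <+: c i) :
    List.ofFn (fun k : Fin r.length => prefixChainLimit c d k) = r := by
  refine List.ext_getElem (by simp) fun k _ hk => ?_
  rw [List.getElem_ofFn, prefixChainLimit_eq_getD d hc hlen (hk.trans_le hr.length_le),
    hr.getD_eq d hk, List.getD_eq_getElem]

end PrefixChain

theorem Nat.nth_mem_range {f : ℕ → ℕ} (hf : StrictMono f) (n : ℕ) :
    Nat.nth (· ∈ Set.range f) n = f n := by
  have hinf : (Set.range f).Infinite := Set.infinite_range_of_injective hf.injective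
  simpa using (Nat.nth_comp_of_strictMono (p := (· ∈ Set.range f)) (n := n) hf (fun _ => id)
    fun hfin => absurd hfin hinf).symm

def markAt (m : ℕ) (l : List Bool) : List Bool := l.rightpad m false ++ [true]

theorem prefix_markAt (m : ℕ) (l : List Bool) : l <+: markAt m l := by
  simp [markAt, List.rightpad]

theorem length_markAt {m : ℕ} {l : List Bool} (h : l.length ≤ m) :
    (markAt m l).length = m + 1 := by
  rw [markAt, List.length_append, List.length_rightpad, max_eq_left h]
  rfl

theorem getD_markAt {m : ℕ} {l : List Bool} (h : l.length ≤ m) (n : ℕ) :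
    (markAt m l).getD n false = (decide (n = m) || l.getD n false) := by
  simp only [markAt, List.rightpad, List.append_assoc, List.getD_eq_getElem?_getD,
    List.getElem?_append, List.length_replicate, List.getElem?_replicate]
  grind

open Classical in
noncomputable def parityCode (x : Set ℕ) (i L : ℕ) : ℕ := if (Even L ↔ i ∈ x) then L else L + 1

theorem le_parityCode (x : Set ℕ) (i L : ℕ) : L ≤ parityCode x i L := by
  unfold parityCode; split_ifs <;> omega

theorem even_parityCode_iff (x : Set ℕ) (i L : ℕ) : Even (parityCode x i L) ↔ i ∈ x := by
  unfold parityCode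
  split_ifs with h
  · exact h
  · rw [Nat.even_add_one]; tauto

section Fusion

variable (e : ℕ → List Bool → List Bool) (x : Set ℕ)

def extendBoth (i : ℕ) (pq : List Bool × List Bool) : List Bool × List Bool :=
  (e i pq.1, e i (pq.2.rightpad (e i pq.1).length false))

noncomputable def fusion : ℕ → List Bool × List Bool
  | 0 => ([], [])
  | i + 1 =>
    let r := extendBoth e i (fusion i)
    (markAt (parityCode x i r.2.length) r.1, markAt (parityCode x i r.2.length) r.2)

noncomputable def fusionMark (i : ℕ) : ℕ := parityCode x i (extendBoth e i (fusion e x i)).2.length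

theorem fusion_succ (i : ℕ) :
    fusion e x (i + 1) = (markAt (fusionMark e x i) (extendBoth e i (fusion e x i)).1,
      markAt (fusionMark e x i) (extendBoth e i (fusion e x i)).2) := rfl

theorem extendBoth_prefix_fusion_succ (i : ℕ) :
    (extendBoth e i (fusion e x i)).1 <+: (fusion e x (i + 1)).1 ∧
      (extendBoth e i (fusion e x i)).2 <+: (fusion e x (i + 1)).2 :=
  ⟨prefix_markAt _ _, prefix_markAt _ _⟩

noncomputable def fusionFst : ℕ → Bool := prefixChainLimit (fun i => (fusion e x i).1) false

noncomputable def fusionSnd : ℕ → Bool := prefixChainLimit (fun i => (fusion e x i).2) false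

variable {e} (he : ∀ i l, l <+: e i l)
include he

theorem fst_prefix_extendBoth (i : ℕ) (pq : List Bool × List Bool) :
    pq.1 <+: (extendBoth e i pq).1 := he i pq.1

theorem snd_prefix_extendBoth (i : ℕ) (pq : List Bool × List Bool) :
    pq.2 <+: (extendBoth e i pq).2 :=
  (List.prefix_append _ _).trans (he i _)

theorem length_extendBoth_fst_le_snd (i : ℕ) (pq : List Bool × List Bool) :
    (extendBoth e i pq).1.length ≤ (extendBoth e i pq).2.length :=
  calc (e i pq.1).length ≤ (pq.2.rightpad (e i pq.1).length false).length := by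
        rw [List.length_rightpad]; exact le_max_left _ _
    _ ≤ _ := (he i _).length_le

/-- Beyond the common old length, `q` was padded with `0`s wherever the extension of `p` lives. -/
theorem extendBoth_getD_and_iff (i : ℕ) {pq : List Bool × List Bool}
    (hpq : pq.1.length = pq.2.length) (n : ℕ) :
    ((extendBoth e i pq).1.getD n false = true ∧ (extendBoth e i pq).2.getD n false = true) ↔
      (pq.1.getD n false = true ∧ pq.2.getD n false = true) := by
  by_cases hn : n < pq.1.length
  · rw [(fst_prefix_extendBoth he i pq).getD_eq _ hn,
      (snd_prefix_extendBoth he i pq).getD_eq _ (hpq ▸ hn)]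
  · rw [List.getD_eq_default _ _ (not_lt.mp hn)]
    simp only [Bool.false_eq_true, false_and, iff_false, not_and]
    intro h1
    change (e i pq.1).getD n false = true at h1
    have hn₁ : n < (e i pq.1).length := by
      by_contra h
      rw [List.getD_eq_default _ _ (not_lt.mp h)] at h1
      exact Bool.false_ne_true h1
    have hpad : n < (pq.2.rightpad (e i pq.1).length false).length := by
      rw [List.length_rightpad]; exact lt_max_of_lt_left hn₁
    rw [extendBoth, (he i _).getD_eq _ hpad, List.getD_rightpad,
      List.getD_eq_default _ _ (hpq ▸ not_lt.mp hn)]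
    exact Bool.false_ne_true

theorem length_extendBoth_le_fusionMark (i : ℕ) :
    (extendBoth e i (fusion e x i)).1.length ≤ fusionMark e x i ∧
      (extendBoth e i (fusion e x i)).2.length ≤ fusionMark e x i :=
  have h := le_parityCode x i (extendBoth e i (fusion e x i)).2.length
  ⟨(length_extendBoth_fst_le_snd he i _).trans h, h⟩

theorem length_fusion_succ (i : ℕ) :
    (fusion e x (i + 1)).1.length = fusionMark e x i + 1 ∧
      (fusion e x (i + 1)).2.length = fusionMark e x i + 1 :=
  ⟨length_markAt (length_extendBoth_le_fusionMark x he i).1,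
    length_markAt (length_extendBoth_le_fusionMark x he i).2⟩

theorem length_fusion_fst_eq_snd : ∀ i, (fusion e x i).1.length = (fusion e x i).2.length
  | 0 => rfl
  | i + 1 => by rw [(length_fusion_succ x he i).1, (length_fusion_succ x he i).2]

theorem length_fusion_le_fusionMark (i : ℕ) : (fusion e x i).1.length ≤ fusionMark e x i :=
  (fst_prefix_extendBoth he i _).length_le.trans (length_extendBoth_le_fusionMark x he i).1

theorem fusionMark_strictMono : StrictMono (fusionMark e x) :=
  strictMono_nat_of_lt_succ fun i => by
    have := length_fusion_le_fusionMark x he (i + 1)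
    rw [(length_fusion_succ x he i).1] at this
    omega

theorem le_length_fusion (i : ℕ) : i ≤ (fusion e x i).1.length := by
  cases i with
  | zero => exact le_rfl
  | succ i =>
    rw [(length_fusion_succ x he i).1]
    exact Nat.succ_le_succ ((fusionMark_strictMono x he).id_le i)

theorem fusion_fst_prefix_succ (i : ℕ) : (fusion e x i).1 <+: (fusion e x (i + 1)).1 :=
  (fst_prefix_extendBoth he i _).trans (extendBoth_prefix_fusion_succ e x i).1

theorem fusion_snd_prefix_succ (i : ℕ) : (fusion e x i).2 <+: (fusion e x (i + 1)).2 :=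
  (snd_prefix_extendBoth he i _).trans (extendBoth_prefix_fusion_succ e x i).2

theorem fusion_getD_and_iff (i n : ℕ) :
    ((fusion e x i).1.getD n false = true ∧ (fusion e x i).2.getD n false = true) ↔
      ∃ j < i, fusionMark e x j = n := by
  induction i with
  | zero => simp [fusion]
  | succ i ih =>
    have hm := length_extendBoth_le_fusionMark x he i
    rw [fusion_succ, getD_markAt hm.1, getD_markAt hm.2, Nat.exists_lt_succ_right, ← ih,
      ← extendBoth_getD_and_iff he i (length_fusion_fst_eq_snd x he i)]
    simp only [Bool.or_eq_true, decide_eq_true_eq]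
    grind

theorem le_length_fusion_snd (i : ℕ) : i ≤ (fusion e x i).2.length :=
  length_fusion_fst_eq_snd x he i ▸ le_length_fusion x he i

theorem exists_ofFn_fusionFst_eq (i : ℕ) :
    ∃ n, List.ofFn (fun k : Fin n => fusionFst e x k) = e i (fusion e x i).1 :=
  ⟨_, ofFn_prefixChainLimit _ (fusion_fst_prefix_succ x he) (le_length_fusion x he)
    (extendBoth_prefix_fusion_succ e x i).1⟩

theorem exists_ofFn_fusionSnd_eq (i : ℕ) :
    ∃ n, List.ofFn (fun k : Fin n => fusionSnd e x k) = (extendBoth e i (fusion e x i)).2 :=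
  ⟨_, ofFn_prefixChainLimit _ (fusion_snd_prefix_succ x he) (le_length_fusion_snd x he)
    (extendBoth_prefix_fusion_succ e x i).2⟩

theorem fusionFst_and_fusionSnd_iff (n : ℕ) :
    (fusionFst e x n = true ∧ fusionSnd e x n = true) ↔ n ∈ Set.range (fusionMark e x) := by
  have hn₁ : n < (fusion e x (n + 1)).1.length := le_length_fusion x he (n + 1)
  have hn₂ : n < (fusion e x (n + 1)).2.length := le_length_fusion_snd x he (n + 1)
  rw [fusionFst, fusionSnd,
    prefixChainLimit_eq_getD _ (fusion_fst_prefix_succ x he) (le_length_fusion x he) hn₁,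
    prefixChainLimit_eq_getD _ (fusion_snd_prefix_succ x he) (le_length_fusion_snd x he) hn₂,
    fusion_getD_and_iff x he]
  exact ⟨fun ⟨j, _, hj⟩ => ⟨j, hj⟩, fun ⟨j, hj⟩ =>
    ⟨j, Nat.lt_succ_of_le (hj ▸ (fusionMark_strictMono x he).id_le j), hj⟩⟩

end Fusion

/-- Cohen forcing fusion: given countably many dense subsets of Cohen forcing
(conditions are finite binary sequences, i.e. `List Bool`, extension being
end-extension) and a set `x ⊆ ω`, there are total functions `g, h : ω → 2` each of
which meets every `D i` via a finite initial segment, such that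
`ḡ ∩ h̄ = {n : g n = h n = 1}` is infinite and its `i`-th element (in increasing
order) is even iff `i ∈ x`. -/
theorem stmt9 (D : ℕ → Set (List Bool))
    (hD : ∀ i, ∀ p : List Bool, ∃ q ∈ D i, p <+: q)
    (x : Set ℕ) :
    ∃ g h : ℕ → Bool,
      (∀ i, ∃ n, (List.ofFn fun k : Fin n => g k) ∈ D i) ∧
      (∀ i, ∃ n, (List.ofFn fun k : Fin n => h k) ∈ D i) ∧
      {n | g n = true ∧ h n = true}.Infinite ∧
      (∀ i, Even (Nat.nth (fun n => g n = true ∧ h n = true) i) ↔ i ∈ x) := by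
  choose e heD he using hD
  refine ⟨fusionFst e x, fusionSnd e x,
    fun i => let ⟨n, hn⟩ := exists_ofFn_fusionFst_eq x he i; ⟨n, hn ▸ heD i _⟩,
    fun i => let ⟨n, hn⟩ := exists_ofFn_fusionSnd_eq x he i; ⟨n, hn ▸ heD i _⟩, ?_, fun i => ?_⟩
  all_goals simp_rw [fusionFst_and_fusionSnd_iff x he]
  · exact Set.infinite_range_of_injective (fusionMark_strictMono x he).injective
  · rw [Nat.nth_mem_range (fusionMark_strictMono x he)]
    exact even_parityCode_iff x i _
end

section
/- Let κ be an infinite cardinal such that 2^κ = κ⁺. Then there is a universal graph on κ⁺: a graph G with vertex set of cardinality κ⁺ such that every graph H on a vertex set of cardinality at most κ⁺ admits an embedding into G as an induced subgraph (an injective map f with: u and v adjacent in H if and only if f(u) and f(v) are adjacent in G). -/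
universe u

open Cardinal Set

/-! Since `(κ⁺)^κ = 2^(κ·κ) = κ⁺`, the ordinals `β < κ⁺` can be labelled by sets `S β` of size
at most `κ` so that every such set labels cofinally many `β`; join `α < β` when `α ∈ S β`.
A graph on `κ⁺` embeds into this graph by transfinite recursion: the image of `w` is taken above
the images of all `u < w` and labelled by the images of the neighbours of `w` below `w`. Both
sets have size at most `κ`, hence are bounded in `κ⁺`, so such a label exists. -/

theorem WellFoundedLT.exists_forall_rec {W V : Type*} [Preorder W] [WellFoundedLT W]
    (P : ∀ w : W, (Iio w → V) → V → Prop) (hP : ∀ w g, ∃ β, P w g β) :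
    ∃ f : W → V, ∀ w, P w (fun u => f u) (f w) := by
  choose step hstep using hP
  let f : W → V := IsWellFounded.fix (· < ·) fun w ih => step w fun u => ih u u.2
  refine ⟨f, fun w => ?_⟩
  rw [show f w = _ from IsWellFounded.fix_eq (· < ·) _ w]
  exact hstep w _

theorem exists_large_fibres_over_small_sets {V : Type u} (κ : Cardinal.{u}) (hV : ℵ₀ ≤ #V)
    (hpow : #V ^ κ = #V) :
    ∃ S : V → Set V, ∀ X : Set V, #X ≤ κ → #V ≤ #(S ⁻¹' {X}) := by
  have hsmall : #{X : Set V // #X ≤ κ} ≤ #V :=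
    (mk_bounded_set_le V κ).trans_eq (by rw [max_eq_left hV, hpow])
  obtain ⟨e⟩ : Nonempty (V ≃ V × {X : Set V // #X ≤ κ}) := by
    refine Cardinal.eq.mp ?_
    rw [mk_prod, lift_id, lift_id, mul_eq_left hV hsmall (mk_ne_zero_iff.mpr ⟨⟨∅, by simp⟩⟩)]
  refine ⟨fun β => (e β).2, fun X hX => mk_le_of_injective (f := fun v =>
    (⟨e.symm (v, ⟨X, hX⟩), by simp⟩ : (fun β => ((e β).2 : Set V)) ⁻¹' {X})) ?_⟩
  intro v w hvw
  simpa using congrArg Subtype.val hvw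

section Code

variable {V : Type u} [LinearOrder V]

/-- `S β` is the set of neighbours of `β` below `β`. -/
def codeGraph (S : V → Set V) : SimpleGraph V :=
  SimpleGraph.fromRel fun α β => α < β ∧ α ∈ S β

theorem codeGraph_adj_of_lt {S : V → Set V} {α β : V} (h : α < β) :
    (codeGraph S).Adj α β ↔ α ∈ S β := by
  simp only [codeGraph, SimpleGraph.fromRel_adj, h, true_and, h.ne, ne_eq, not_false_eq_true]
  exact or_iff_left fun h' => lt_asymm h h'.1

def IsExtensionCode (κ : Cardinal.{u}) (S : V → Set V) : Prop :=
  ∀ X B : Set V, #X ≤ κ → #B ≤ κ → ∃ β, (∀ b ∈ B, b < β) ∧ S β = X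

variable {κ : Cardinal.{u}}

theorem IsExtensionCode.nonempty_embedding {S : V → Set V}
    (hS : IsExtensionCode κ S) {W : Type u} [LinearOrder W] [WellFoundedLT W]
    (hW : ∀ w : W, #(Iic w) ≤ κ) (H : SimpleGraph W) : Nonempty (H ↪g codeGraph S) := by
  obtain ⟨f, hf⟩ := WellFoundedLT.exists_forall_rec
    (fun w (g : Iio w → V) β => (∀ u, g u < β) ∧ S β = g '' {u | H.Adj u w}) fun w g => by
      have hg : #(range g) ≤ κ :=
        mk_range_le.trans <| (mk_le_mk_of_subset Iio_subset_Iic_self).trans (hW w)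
      obtain ⟨β, hβ, hSβ⟩ :=
        hS _ _ ((mk_le_mk_of_subset (image_subset_range _ _)).trans hg) hg
      exact ⟨β, fun u => hβ _ (mem_range_self u), hSβ⟩
  have hmono : StrictMono f := fun u w huw => (hf w).1 ⟨u, huw⟩
  have hadj : ∀ ⦃u w⦄, u < w → ((codeGraph S).Adj (f u) (f w) ↔ H.Adj u w) := by
    intro u w huw
    rw [codeGraph_adj_of_lt (hmono huw), (hf w).2]
    constructor
    · rintro ⟨u', hu', hfu'⟩
      rwa [← hmono.injective hfu']
    · exact fun h => ⟨⟨u, huw⟩, h, rfl⟩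
  refine ⟨⟨⟨f, hmono.injective⟩, fun {u w} => ?_⟩⟩
  rcases lt_trichotomy u w with huw | rfl | hwu
  · exact hadj huw
  · simp
  · rw [SimpleGraph.adj_comm, H.adj_comm]
    exact hadj hwu

theorem exists_forall_lt_of_mk_le (hκ : ℵ₀ ≤ κ) (hIic : ∀ b : V, #(Iic b) ≤ κ)
    (hV : κ < #V) {B : Set V} (hB : #B ≤ κ) : ∃ β, ∀ b ∈ B, b < β := by
  have hU : #(⋃ b ∈ B, Iic b) < #V := by
    refine (mk_biUnion_le _ _).trans_lt (lt_of_le_of_lt ?_ hV)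
    calc #B * ⨆ b : B, #(Iic b.1) ≤ κ * κ := by
          gcongr
          exact ciSup_le' fun b => hIic b
      _ = κ := mul_eq_self hκ
  obtain ⟨β, hβ⟩ : ∃ β, β ∉ ⋃ b ∈ B, Iic b := by
    by_contra! h
    exact hU.ne (by rw [eq_univ_of_forall h, mk_univ])
  simp only [mem_iUnion, mem_Iic, not_exists, not_le] at hβ
  exact ⟨β, hβ⟩

theorem exists_lt_mem_of_lt_mk (hIic : ∀ b : V, #(Iic b) ≤ κ) {A : Set V} (hA : κ < #A)
    (b : V) : ∃ a ∈ A, b < a := by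
  by_contra! h
  exact not_le.mpr hA ((mk_le_mk_of_subset h).trans (hIic b))

theorem exists_isExtensionCode (hκ : ℵ₀ ≤ κ) (hIic : ∀ b : V, #(Iic b) ≤ κ) (hV : κ < #V)
    (hpow : #V ^ κ = #V) : ∃ S : V → Set V, IsExtensionCode κ S := by
  obtain ⟨S, hS⟩ := exists_large_fibres_over_small_sets κ (hκ.trans hV.le) hpow
  refine ⟨S, fun X B hX hB => ?_⟩
  obtain ⟨b₀, hb₀⟩ := exists_forall_lt_of_mk_le hκ hIic hV hB
  obtain ⟨β, hSβ, hβ⟩ := exists_lt_mem_of_lt_mk hIic (hV.trans_le (hS X hX)) b₀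
  exact ⟨β, fun b hb => (hb₀ b hb).trans hβ, hSβ⟩

end Code

theorem mk_Iic_toType_ord_succ_le {κ : Cardinal} (hκ : ℵ₀ ≤ κ)
    (b : (Order.succ κ).ord.ToType) : #(Iic b) ≤ κ := by
  rw [← Iio_insert]
  have hIio : #(Iio b) ≤ κ := Order.lt_succ_iff.mp (by simpa using mk_Iio_lt b)
  calc #(insert b (Iio b) : Set _) ≤ #(Iio b) + 1 := mk_insert_le
    _ ≤ κ + 1 := by gcongr
    _ = κ := add_one_eq hκ

/-- If `2^κ = κ⁺` then there is a universal graph on `κ⁺`: a graph on a vertex set of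
cardinality `κ⁺` into which every graph on at most `κ⁺` vertices embeds as an induced
subgraph. -/
theorem stmt11 (κ : Cardinal.{u}) (hκ : Cardinal.aleph0 ≤ κ)
    (h : 2 ^ κ = Order.succ κ) :
    ∃ (V : Type u) (G : SimpleGraph V), Cardinal.mk V = Order.succ κ ∧
      ∀ (W : Type u) (H : SimpleGraph W), Cardinal.mk W ≤ Order.succ κ →
        Nonempty (H ↪g G) := by
  set V := (Order.succ κ).ord.ToType
  have hV : #V = Order.succ κ := mk_ord_toType _
  have hIic : ∀ b : V, #(Iic b) ≤ κ := mk_Iic_toType_ord_succ_le hκ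
  have hpow : #V ^ κ = #V := by rw [hV, ← h, ← power_mul, mul_eq_self hκ]
  obtain ⟨S, hS⟩ := exists_isExtensionCode hκ hIic (hV ▸ Order.lt_succ κ) hpow
  refine ⟨V, codeGraph S, hV, fun W H hW => ?_⟩
  obtain ⟨ι⟩ : Nonempty (W ↪ V) := by rwa [← le_def, hV]
  obtain ⟨F⟩ := hS.nonempty_embedding hIic (H.map ι)
  exact ⟨F.comp (SimpleGraph.Embedding.map ι H)⟩
end
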